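/- On the open set {u₁ ≠ u₂, u₁ ≠ 0, u₂ ≠ 0} ⊂ ℝ⁴ with coordinates (u₁,u₂,p₁,p₂), define H = u₁(2u₁+u₂)p₁²/(u₁−u₂) + u₂(u₁+2u₂)p₂²/(u₂−u₁) − 2u₁² − 3u₁u₂ − 2u₂² and K = (u₁²u₂²/(u₂−u₁)³)·( (3u₁+u₂)p₁⁴ − (u₁+3u₂)p₂⁴ − 8u₁p₁³p₂ + 8u₂p₁p₂³ + 6(u₁−u₂)p₁²p₂² − 2(u₁−u₂)(u₁+3u₂)p₁² + 8(u₁²−u₂²)p₁p₂ − 2(u₁−u₂)(3u₁+u₂)p₂² − (u₁−u₂)³ ). Then {H, K} = 0 with respect to the canonical Poisson bracket; i.e. the natural Hamiltonian H, quadratic in momenta, possesses a first integral K which is a polynomial of fourth order in momenta. -/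

import Mathlib

/-- The canonical Poisson bracket on `ℝ⁴` with coordinates `(u₁,u₂,p₁,p₂)`. -/
noncomputable def poissonBracket (f g : ℝ → ℝ → ℝ → ℝ → ℝ) (u₁ u₂ p₁ p₂ : ℝ) : ℝ :=
    deriv (fun x => f x u₂ p₁ p₂) u₁ * deriv (fun y => g u₁ u₂ y p₂) p₁
  + deriv (fun x => f u₁ x p₁ p₂) u₂ * deriv (fun y => g u₁ u₂ p₁ y) p₂
  - deriv (fun y => f u₁ u₂ y p₂) p₁ * deriv (fun x => g x u₂ p₁ p₂) u₁
  - deriv (fun y => f u₁ u₂ p₁ y) p₂ * deriv (fun x => g u₁ x p₁ p₂) u₂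

/-- Natural position-dependent-mass Hamiltonian `H = T + V`, quadratic in momenta. -/
noncomputable def HFun (x₁ x₂ y₁ y₂ : ℝ) : ℝ :=
  x₁ * (2 * x₁ + x₂) * y₁ ^ 2 / (x₁ - x₂) + x₂ * (x₁ + 2 * x₂) * y₂ ^ 2 / (x₂ - x₁)
    - 2 * x₁ ^ 2 - 3 * x₁ * x₂ - 2 * x₂ ^ 2

/-- Quartic-in-momenta first integral `K`. -/
noncomputable def KFun (x₁ x₂ y₁ y₂ : ℝ) : ℝ :=
  x₁ ^ 2 * x₂ ^ 2 / (x₂ - x₁) ^ 3 *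
    ((3 * x₁ + x₂) * y₁ ^ 4 - (x₁ + 3 * x₂) * y₂ ^ 4 - 8 * x₁ * y₁ ^ 3 * y₂
      + 8 * x₂ * y₁ * y₂ ^ 3 + 6 * (x₁ - x₂) * y₁ ^ 2 * y₂ ^ 2
      - 2 * (x₁ - x₂) * (x₁ + 3 * x₂) * y₁ ^ 2
      + 8 * (x₁ ^ 2 - x₂ ^ 2) * y₁ * y₂
      - 2 * (x₁ - x₂) * (3 * x₁ + x₂) * y₂ ^ 2 - (x₁ - x₂) ^ 3)

/-!
Both `H` and `K` are invariant under exchanging the two degrees of freedom,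
`(u₁, u₂, p₁, p₂) ↦ (u₂, u₁, p₂, p₁)`. Hence `{H, K}` is the contribution
`∂H/∂u₁ ∂K/∂p₁ - ∂H/∂p₁ ∂K/∂u₁` of the first degree of freedom plus its mirror image.
These partial derivatives are explicit rational functions with denominators powers of
`u₁ - u₂`, and the sum of the two contributions vanishes identically.
-/

noncomputable def poissonBracket₁ (f g : ℝ → ℝ → ℝ → ℝ → ℝ) (u₁ u₂ p₁ p₂ : ℝ) : ℝ :=
  deriv (fun x => f x u₂ p₁ p₂) u₁ * deriv (fun y => g u₁ u₂ y p₂) p₁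
    - deriv (fun y => f u₁ u₂ y p₂) p₁ * deriv (fun x => g x u₂ p₁ p₂) u₁

theorem poissonBracket_eq_add_swap {f g : ℝ → ℝ → ℝ → ℝ → ℝ}
    (hf : ∀ a b c d, f b a d c = f a b c d) (hg : ∀ a b c d, g b a d c = g a b c d)
    (u₁ u₂ p₁ p₂ : ℝ) :
    poissonBracket f g u₁ u₂ p₁ p₂ =
      poissonBracket₁ f g u₁ u₂ p₁ p₂ + poissonBracket₁ f g u₂ u₁ p₂ p₁ := by
  have hf_u : (fun x => f u₁ x p₁ p₂) = fun x => f x u₁ p₂ p₁ := funext fun x => hf x u₁ p₂ p₁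
  have hf_p : (fun y => f u₁ u₂ p₁ y) = fun y => f u₂ u₁ y p₁ := funext fun y => hf u₂ u₁ y p₁
  have hg_u : (fun x => g u₁ x p₁ p₂) = fun x => g x u₁ p₂ p₁ := funext fun x => hg x u₁ p₂ p₁
  have hg_p : (fun y => g u₁ u₂ p₁ y) = fun y => g u₂ u₁ y p₁ := funext fun y => hg u₂ u₁ y p₁
  rw [poissonBracket, poissonBracket₁, poissonBracket₁, hf_u, hf_p, hg_u, hg_p]
  ring

theorem HFun_swap (x₁ x₂ y₁ y₂ : ℝ) : HFun x₂ x₁ y₂ y₁ = HFun x₁ x₂ y₁ y₂ := by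
  unfold HFun
  ring

theorem KFun_swap (x₁ x₂ y₁ y₂ : ℝ) : KFun x₂ x₁ y₂ y₁ = KFun x₁ x₂ y₁ y₂ := by
  unfold KFun
  rw [show (x₁ - x₂) ^ 3 = -(x₂ - x₁) ^ 3 by ring, div_neg]
  ring

theorem deriv_HFun_u₁ {u₁ u₂ : ℝ} (h : u₁ ≠ u₂) (p₁ p₂ : ℝ) :
    deriv (fun x => HFun x u₂ p₁ p₂) u₁ =
      ((2 * u₁ ^ 2 - 4 * u₁ * u₂ - u₂ ^ 2) * p₁ ^ 2 + 3 * u₂ ^ 2 * p₂ ^ 2) / (u₁ - u₂) ^ 2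
        - 4 * u₁ - 3 * u₂ := by
  have h₁₂ : u₁ - u₂ ≠ 0 := sub_ne_zero.mpr h
  have h₂₁ : u₂ - u₁ ≠ 0 := sub_ne_zero.mpr h.symm
  unfold HFun
  simp (disch := first | fun_prop (disch := assumption) | assumption) only [deriv_fun_add,
    deriv_fun_sub, deriv_fun_mul, deriv_fun_div, deriv_fun_pow, deriv_id'', deriv_const,
    deriv_const_mul_id, deriv_const_sub_id]
  field_simp
  ring

theorem deriv_HFun_p₁ (u₁ u₂ p₁ p₂ : ℝ) :
    deriv (fun y => HFun u₁ u₂ y p₂) p₁ = 2 * u₁ * (2 * u₁ + u₂) * p₁ / (u₁ - u₂) := by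
  unfold HFun
  simp (disch := fun_prop) only [deriv_fun_add, deriv_fun_sub, deriv_fun_mul, deriv_div_const,
    deriv_fun_pow, deriv_id'', deriv_const]
  ring

theorem deriv_KFun_u₁ {u₁ u₂ : ℝ} (h : u₁ ≠ u₂) (p₁ p₂ : ℝ) :
    deriv (fun x => KFun x u₂ p₁ p₂) u₁ =
      u₁ * u₂ ^ 2 * (u₁ + 2 * u₂) / (u₂ - u₁) ^ 4 *
          ((3 * u₁ + u₂) * p₁ ^ 4 - (u₁ + 3 * u₂) * p₂ ^ 4 - 8 * u₁ * p₁ ^ 3 * p₂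
            + 8 * u₂ * p₁ * p₂ ^ 3 + 6 * (u₁ - u₂) * p₁ ^ 2 * p₂ ^ 2
            - 2 * (u₁ - u₂) * (u₁ + 3 * u₂) * p₁ ^ 2
            + 8 * (u₁ ^ 2 - u₂ ^ 2) * p₁ * p₂
            - 2 * (u₁ - u₂) * (3 * u₁ + u₂) * p₂ ^ 2 - (u₁ - u₂) ^ 3)
        + u₁ ^ 2 * u₂ ^ 2 / (u₂ - u₁) ^ 3 *
          (3 * p₁ ^ 4 - p₂ ^ 4 - 8 * p₁ ^ 3 * p₂ + 6 * p₁ ^ 2 * p₂ ^ 2 - 4 * (u₁ + u₂) * p₁ ^ 2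
            + 16 * u₁ * p₁ * p₂ - 4 * (3 * u₁ - u₂) * p₂ ^ 2 - 3 * (u₁ - u₂) ^ 2) := by
  have h₂₁ : (u₂ - u₁) ^ 3 ≠ 0 := pow_ne_zero 3 (sub_ne_zero.mpr h.symm)
  unfold KFun
  simp (disch := first | fun_prop (disch := assumption) | assumption) only [deriv_fun_add,
    deriv_fun_sub, deriv_fun_mul, deriv_fun_div, deriv_fun_pow, deriv_id'', deriv_const,
    deriv_const_mul_id, deriv_const_sub_id]
  field_simp
  ring

theorem deriv_KFun_p₁ (u₁ u₂ p₁ p₂ : ℝ) :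
    deriv (fun y => KFun u₁ u₂ y p₂) p₁ =
      u₁ ^ 2 * u₂ ^ 2 / (u₂ - u₁) ^ 3 *
        (4 * (3 * u₁ + u₂) * p₁ ^ 3 - 24 * u₁ * p₁ ^ 2 * p₂ + 8 * u₂ * p₂ ^ 3
          + 12 * (u₁ - u₂) * p₁ * p₂ ^ 2 - 4 * (u₁ - u₂) * (u₁ + 3 * u₂) * p₁
          + 8 * (u₁ ^ 2 - u₂ ^ 2) * p₂) := by
  unfold KFun
  simp (disch := fun_prop) only [deriv_fun_add, deriv_fun_sub, deriv_fun_mul, deriv_fun_pow,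
    deriv_id'', deriv_const, deriv_const_mul_id]
  ring

theorem H_K_in_involution_general (u₁ u₂ p₁ p₂ : ℝ)
    (h : u₁ ≠ u₂) :
    poissonBracket HFun KFun u₁ u₂ p₁ p₂ = 0 := by
  rw [poissonBracket_eq_add_swap HFun_swap KFun_swap, poissonBracket₁, poissonBracket₁,
    deriv_HFun_u₁ h, deriv_HFun_u₁ h.symm, deriv_HFun_p₁, deriv_HFun_p₁,
    deriv_KFun_u₁ h, deriv_KFun_u₁ h.symm, deriv_KFun_p₁, deriv_KFun_p₁]
  have h₁₂ : u₁ - u₂ ≠ 0 := sub_ne_zero.mpr h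
  field_simp
  ring

/-- The natural Hamiltonian `H`, quadratic in momenta, possesses the first
integral `K`, quartic in momenta: `{H, K} = 0` on the open set
`{u₁ ≠ u₂, u₁ ≠ 0, u₂ ≠ 0}`. -/
theorem H_K_in_involution (u₁ u₂ p₁ p₂ : ℝ)
    (h : u₁ ≠ u₂) (h₁ : u₁ ≠ 0) (h₂ : u₂ ≠ 0) :
    poissonBracket HFun KFun u₁ u₂ p₁ p₂ = 0 :=
  H_K_in_involution_general u₁ u₂ p₁ p₂ h
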